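/- arXiv:1810.03131 — 4 statements merged into one kernel-verified Lean document; each statement's English description precedes it below -/
import Mathlib

section
/- Let P₁, …, Pₙ be lattice polytopes in ℤ^d with each L_{Pⱼ} containing the origin, and let P = (P₁,…,Pₙ). Then the index of the Cayley polytope 𝒞(P) (with respect to the ambient lattice ℤ^d × Λ^{n-1}) equals ind(P) := [ℤ^d ∩ (L_P ⊗ ℝ) : L_P]. -/
/-!
The difference lattice of the Cayley vertices `(w, eⱼ)`, `w ∈ Pⱼ`, splits as `L_P × A`, where
`A = {y : ∑ yᵢ = 0}`: differences inside one fibre give `(w - x, 0)`, which generate `L_P × 0`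
because `0 ∈ L_{Pⱼ}`, and differences across fibres then supply every `(0, eⱼ - eₖ)`.
Saturation commutes with products, and the condition `∑ yᵢ = 0` cuts the second factor back
to `A`, so both lattices are products with the common factor `A`, which drops out of the index.
-/

noncomputable section

/-- Coordinatewise cast `ℤ → ℝ`, as an additive group homomorphism. -/
def castH {ι : Type*} : (ι → ℤ) →+ (ι → ℝ) where
  toFun z := fun i => (z i : ℝ)
  map_zero' := by funext i; simp
  map_add' x y := by funext i; simp

/-- The affine lattice spanned by a finite set of points:
all integer affine combinations of the points. -/
def affLat {M : Type*} [AddCommGroup M] (S : Finset M) : Set M :=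
  {z | ∃ a : M → ℤ, (∑ x ∈ S, a x) = 1 ∧ (∑ x ∈ S, a x • x) = z}

namespace AddSubgroup

variable {G N : Type*} [AddGroup G] [AddGroup N]

theorem relIndex_prod (H K : AddSubgroup G) (A B : AddSubgroup N) :
    (H.prod A).relIndex (K.prod B) = H.relIndex K * A.relIndex B := by
  have hcomap : ((H.prod A).addSubgroupOf (K.prod B)).comap
      (K.prodEquiv B).symm.toAddMonoidHom = (H.addSubgroupOf K).prod (A.addSubgroupOf B) := by
    ext ⟨x, y⟩; rfl
  rw [relIndex, ← index_comap_of_surjective _ (f := (K.prodEquiv B).symm.toAddMonoidHom)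
    (K.prodEquiv B).symm.surjective, hcomap, index_prod]
  rfl

end AddSubgroup

def translationLattice {G : Type*} [AddGroup G] (S : Finset G) : AddSubgroup G :=
  AddSubgroup.closure {c | ∃ a ∈ S, ∃ b ∈ S, c = a - b}

theorem sub_mem_translationLattice {G : Type*} [AddGroup G] {S : Finset G} {a b : G}
    (ha : a ∈ S) (hb : b ∈ S) : a - b ∈ translationLattice S :=
  AddSubgroup.subset_closure ⟨a, ha, b, hb, rfl⟩

theorem sub_mem_translationLattice_of_mem_affLat {G : Type*} [AddCommGroup G] {S : Finset G}
    {z w : G} (hz : z ∈ affLat S) (hw : w ∈ S) : w - z ∈ translationLattice S := by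
  obtain ⟨coef, hsum, rfl⟩ := hz
  have hcomb : w - ∑ x ∈ S, coef x • x = ∑ x ∈ S, coef x • (w - x) := by
    simp only [smul_sub, Finset.sum_sub_distrib, ← Finset.sum_smul, hsum, one_smul]
  rw [hcomb]
  exact AddSubgroup.sum_mem _ fun x hx =>
    AddSubgroup.zsmul_mem _ (sub_mem_translationLattice hw hx) _

/-- The translation lattice of `Λ^{n-1}`. -/
def zeroSumLattice (ι : Type*) [Fintype ι] : AddSubgroup (ι → ℤ) where
  carrier := {y | ∑ i, y i = 0}
  add_mem' hx hy := by simp_all [Finset.sum_add_distrib]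
  zero_mem' := by simp
  neg_mem' hy := by simp_all

theorem mem_zeroSumLattice {ι : Type*} [Fintype ι] {y : ι → ℤ} :
    y ∈ zeroSumLattice ι ↔ ∑ i, y i = 0 := Iff.rfl

theorem zeroSumLattice_le_closure {ι : Type*} [Fintype ι] [DecidableEq ι] :
    zeroSumLattice ι ≤
      AddSubgroup.closure {y | ∃ j k : ι, y = Pi.single j 1 - Pi.single k 1} := by
  intro y hy
  cases isEmpty_or_nonempty ι
  · simp [Subsingleton.elim y 0]
  obtain ⟨k⟩ := ‹Nonempty ι›
  have hy : y = ∑ j, y j • (Pi.single j 1 - Pi.single k 1 : ι → ℤ) := by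
    simp only [smul_sub, Finset.sum_sub_distrib, ← Finset.sum_smul, mem_zeroSumLattice.mp hy,
      zero_smul, sub_zero]
    ext i; simp [Pi.single_apply]
  rw [hy]
  refine AddSubgroup.sum_mem _ fun j _ => AddSubgroup.zsmul_mem _ ?_ _
  exact AddSubgroup.subset_closure ⟨j, k, rfl⟩

/-- `ℤ^ι ∩ (L ⊗ ℝ)`. -/
def saturation {ι : Type*} (L : AddSubgroup (ι → ℤ)) : AddSubgroup (ι → ℤ) :=
  AddSubgroup.comap castH (Submodule.span ℝ (castH '' (L : Set (ι → ℤ)))).toAddSubgroup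

theorem le_saturation {ι : Type*} (L : AddSubgroup (ι → ℤ)) : L ≤ saturation L :=
  fun y hy => Submodule.subset_span ⟨y, hy, rfl⟩

theorem comap_prodMap_span_prod {ι κ : Type*} (L : AddSubgroup (ι → ℤ))
    (A : AddSubgroup (κ → ℤ)) :
    AddSubgroup.comap (castH.prodMap castH)
        (Submodule.span ℝ ((castH.prodMap castH) '' (L.prod A : Set _))).toAddSubgroup =
      (saturation L).prod (saturation A) := by
  have himage : (castH.prodMap castH) '' (L.prod A : Set ((ι → ℤ) × (κ → ℤ))) =
      (castH '' (L : Set (ι → ℤ))) ×ˢ (castH '' (A : Set (κ → ℤ))) := by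
    rw [Set.prod_image_image_eq]; rfl
  rw [himage, Submodule.span_prod_eq ℝ (s := castH '' (L : Set (ι → ℤ)))
    (t := castH '' (A : Set (κ → ℤ))) ⟨0, L.zero_mem, map_zero castH⟩
    ⟨0, A.zero_mem, map_zero castH⟩]
  rfl

theorem sub_mem_closure_iUnion {M ι : Type*} [AddCommGroup M] {V : ι → Finset M}
    {j k : ι} {w w' : M} (hw : w ∈ V j) (hw' : w' ∈ V k) :
    w - w' ∈ AddSubgroup.closure (⋃ j, (V j : Set M)) :=
  sub_mem (AddSubgroup.subset_closure (Set.mem_iUnion_of_mem j hw))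
    (AddSubgroup.subset_closure (Set.mem_iUnion_of_mem k hw'))

section Cayley

variable {M ι : Type*} [DecidableEq M] [Fintype ι] [DecidableEq ι]

def cayleyVertices (V : ι → Finset M) : Finset (M × (ι → ℤ)) :=
  Finset.univ.biUnion fun j => (V j).image fun w => (w, Pi.single j 1)

theorem mem_cayleyVertices {V : ι → Finset M} {z : M × (ι → ℤ)} :
    z ∈ cayleyVertices V ↔ ∃ j, ∃ w ∈ V j, z = (w, Pi.single j 1) := by
  simp [cayleyVertices, eq_comm]

variable [AddCommGroup M] {V : ι → Finset M}

theorem sub_mem_translationLattice_cayleyVertices {j k : ι} {w w' : M} (hw : w ∈ V j)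
    (hw' : w' ∈ V k) :
    (w, Pi.single j 1) - (w', Pi.single k 1) ∈ translationLattice (cayleyVertices V) :=
  sub_mem_translationLattice (mem_cayleyVertices.mpr ⟨j, w, hw, rfl⟩)
    (mem_cayleyVertices.mpr ⟨k, w', hw', rfl⟩)

theorem closure_le_comap_inl_translationLattice (h0 : ∀ j, (0 : M) ∈ affLat (V j)) :
    AddSubgroup.closure (⋃ j, (V j : Set M)) ≤
      (translationLattice (cayleyVertices V)).comap (AddMonoidHom.inl M (ι → ℤ)) := by
  rw [AddSubgroup.closure_le]
  rintro w ⟨_, ⟨j, rfl⟩, hw⟩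
  have hfiber : translationLattice (V j) ≤
      (translationLattice (cayleyVertices V)).comap (AddMonoidHom.inl M (ι → ℤ)) := by
    rw [translationLattice, AddSubgroup.closure_le]
    rintro _ ⟨a, ha, b, hb, rfl⟩
    simpa using sub_mem_translationLattice_cayleyVertices (j := j) ha hb
  simpa using hfiber (sub_mem_translationLattice_of_mem_affLat (h0 j) hw)

theorem zeroSumLattice_le_comap_inr_translationLattice (hV : ∀ j, (V j).Nonempty)
    (h0 : ∀ j, (0 : M) ∈ affLat (V j)) :
    zeroSumLattice ι ≤
      (translationLattice (cayleyVertices V)).comap (AddMonoidHom.inr M (ι → ℤ)) := by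
  refine zeroSumLattice_le_closure.trans ((AddSubgroup.closure_le _).mpr ?_)
  rintro _ ⟨j, k, rfl⟩
  obtain ⟨w, hw⟩ := hV j
  obtain ⟨w', hw'⟩ := hV k
  simpa using sub_mem (sub_mem_translationLattice_cayleyVertices hw hw')
    (closure_le_comap_inl_translationLattice h0 (sub_mem_closure_iUnion hw hw'))

theorem translationLattice_cayleyVertices (hV : ∀ j, (V j).Nonempty)
    (h0 : ∀ j, (0 : M) ∈ affLat (V j)) :
    translationLattice (cayleyVertices V) =
      (AddSubgroup.closure (⋃ j, (V j : Set M))).prod (zeroSumLattice ι) := by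
  apply le_antisymm
  · rw [translationLattice, AddSubgroup.closure_le]
    rintro _ ⟨a, ha, b, hb, rfl⟩
    obtain ⟨j, w, hw, rfl⟩ := mem_cayleyVertices.mp ha
    obtain ⟨k, w', hw', rfl⟩ := mem_cayleyVertices.mp hb
    refine AddSubgroup.mem_prod.mpr ⟨sub_mem_closure_iUnion hw hw', ?_⟩
    simp [mem_zeroSumLattice, Finset.sum_sub_distrib]
  · rintro ⟨x, y⟩ hxy
    obtain ⟨hx, hy⟩ := AddSubgroup.mem_prod.mp hxy
    have hx0 : (x, 0) ∈ translationLattice (cayleyVertices V) :=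
      closure_le_comap_inl_translationLattice h0 hx
    have hy0 : (0, y) ∈ translationLattice (cayleyVertices V) :=
      zeroSumLattice_le_comap_inr_translationLattice hV h0 hy
    simpa using add_mem hx0 hy0

end Cayley

/-- the index of the Cayley polytope `𝒞(P)` of lattice polytopes
`P₁, …, Pₙ ⊆ ℤ^d` (each with `0 ∈ L_{Pⱼ}`) with respect to the ambient lattice
`ℤ^d × Λ^{n-1}` equals `ind(P) = [ℤ^d ∩ (L_P ⊗ ℝ) : L_P]`.  Indices of affine lattices
are computed on the corresponding groups of translations (differences), via `relindex`. -/
theorem stmt_2 (d n : ℕ) (V : Fin n → Finset (Fin d → ℤ))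
    (hV : ∀ j, (V j).Nonempty)
    (h0 : ∀ j, (0 : Fin d → ℤ) ∈ affLat (V j)) :
    -- `L_P` and its saturation `ℤ^d ∩ (L_P ⊗ ℝ)`
    let LP : AddSubgroup (Fin d → ℤ) :=
      AddSubgroup.closure (⋃ j, (V j : Set (Fin d → ℤ)))
    let SP : AddSubgroup (Fin d → ℤ) :=
      AddSubgroup.comap castH
        (Submodule.span ℝ (castH '' (LP : Set (Fin d → ℤ)))).toAddSubgroup
    -- the vertex set of the Cayley polytope
    let C : Finset ((Fin d → ℤ) × (Fin n → ℤ)) :=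
      Finset.univ.biUnion fun j => (V j).image fun w => (w, Pi.single j 1)
    -- translations of the affine lattice `L_{𝒞(P)}` spanned by the vertices
    let DC : AddSubgroup ((Fin d → ℤ) × (Fin n → ℤ)) :=
      AddSubgroup.closure {z | ∃ a ∈ C, ∃ b ∈ C, z = a - b}
    -- translations of the ambient affine lattice `ℤ^d × Λ^{n-1}` lying in `AffSpan 𝒞(P)`
    let KC : AddSubgroup ((Fin d → ℤ) × (Fin n → ℤ)) :=
      (AddSubgroup.comap ((AddMonoidHom.mk' (fun y : Fin n → ℤ => ∑ i, y i)
          (by intro a b; simp [Finset.sum_add_distrib])).comp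
            (AddMonoidHom.snd (Fin d → ℤ) (Fin n → ℤ))) ⊥) ⊓
        AddSubgroup.comap (castH.prodMap castH)
          (Submodule.span ℝ ((castH.prodMap castH) '' (DC : Set _))).toAddSubgroup
    DC.relIndex KC = LP.relIndex SP := by
  intro LP SP C DC KC
  have hDC : DC = LP.prod (zeroSumLattice (Fin n)) := translationLattice_cayleyVertices hV h0
  have hKC : KC = SP.prod (zeroSumLattice (Fin n)) := by
    have hsat : AddSubgroup.comap (castH.prodMap castH)
        (Submodule.span ℝ ((castH.prodMap castH) '' (DC : Set _))).toAddSubgroup =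
        SP.prod (saturation (zeroSumLattice (Fin n))) := by
      rw [hDC, comap_prodMap_span_prod]; rfl
    ext ⟨x, y⟩
    simp only [KC, hsat, AddSubgroup.mem_inf, AddSubgroup.mem_prod]
    exact ⟨fun ⟨hy, hx, _⟩ => ⟨hx, hy⟩,
      fun ⟨hx, hy⟩ => ⟨hy, hx, le_saturation _ hy⟩⟩
  rw [hDC, hKC, AddSubgroup.relIndex_prod, AddSubgroup.relIndex_self, mul_one]
end
end

section
/- Let P₁, …, Pₙ be an affinely independent set of lattice simplices in ℤ^d with each L_{Pⱼ} containing the origin, and let m be a nonzero element of the finite group G_P := (ℤ^d ∩ (L_P ⊗ ℝ))/L_P. Then there exists a unique minimal (in the coordinatewise product order) tuple (c₁,…,cₙ) of nonnegative integers such that the Minkowski sum ∑ⱼ cⱼPⱼ contains a representative of m; moreover this tuple satisfies 0 ≤ cⱼ ≤ dim Pⱼ for all j, and the representative of m in ∑ⱼ cⱼPⱼ for the minimal tuple is unique. -/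
open Pointwise

noncomputable section

/-!
Fix a base vertex `v₀ j` of each simplex. Since `0 ∈ affLat (V j)`, the lattice `L_P` is the
`ℤ`-span of the edge vectors `v - v₀ j`, and affine independence of the family makes these edge
vectors linearly independent over `ℝ`. So `x` has unique real coordinates `t` in them, and the
representatives of `x + L_P` are the points whose coordinates are congruent to `t` modulo `ℤ`.
A point of `∑ⱼ cⱼPⱼ` is `∑ⱼ cⱼ v₀ⱼ ∈ L_P` plus a nonnegative combination `w` of the edges of the
`Pⱼ` with block sums `∑ᵤ w_{j,u} ≤ cⱼ`. The least nonnegative `w ≡ t` is `fract t`, which gives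
the minimal tuple `cⱼ = ⌈∑ᵤ fract t_{j,u}⌉ ≤ dim Pⱼ`; for this tuple the floors of any admissible
`w` are nonnegative integers with sum `< 1` in each block, so `w = fract t` and the representative
is unique.
-/

lemma castH_injective {σ : Type*} : Function.Injective (castH (ι := σ)) :=
  fun _ _ h => funext fun i => Int.cast_injective (congrFun h i)

lemma castH_zsmul {σ : Type*} (k : ℤ) (w : σ → ℤ) : castH (k • w) = (k : ℝ) • castH w := by
  rw [map_zsmul, Int.cast_smul_eq_zsmul]

lemma castH_nsmul {σ : Type*} (k : ℕ) (w : σ → ℤ) : castH (k • w) = (k : ℝ) • castH w := by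
  rw [map_nsmul, Nat.cast_smul_eq_nsmul]

section Convex

variable {ι E : Type*} [AddCommGroup E] [Module ℝ E]

theorem mem_convexHull_image_iff {s : Finset ι} {φ : ι → E} {q : E} :
    q ∈ convexHull ℝ (φ '' s) ↔
      ∃ w : ι → ℝ, (∀ i ∈ s, 0 ≤ w i) ∧ ∑ i ∈ s, w i = 1 ∧ ∑ i ∈ s, w i • φ i = q := by
  classical
  constructor
  · refine fun hq => convexHull_min (t := {q | ∃ w : ι → ℝ, (∀ i ∈ s, 0 ≤ w i) ∧
      ∑ i ∈ s, w i = 1 ∧ ∑ i ∈ s, w i • φ i = q}) ?_ ?_ hq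
    · rintro _ ⟨i, hi, rfl⟩
      refine ⟨fun k => if k = i then 1 else 0, fun k _ => by positivity, ?_, ?_⟩ <;>
        simp [Finset.mem_coe.mp hi]
    · rintro _ ⟨w, hw₀, hw₁, rfl⟩ _ ⟨w', hw₀', hw₁', rfl⟩ a b ha hb hab
      refine ⟨a • w + b • w', fun i hi => ?_, ?_, ?_⟩
      · simp only [Pi.add_apply, Pi.smul_apply, smul_eq_mul]
        have := hw₀ i hi; have := hw₀' i hi; positivity
      · simp [Finset.sum_add_distrib, ← Finset.mul_sum, hw₁, hw₁', hab]
      · simp [add_smul, mul_smul, Finset.sum_add_distrib, ← Finset.smul_sum]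
  · rintro ⟨w, hw₀, hw₁, rfl⟩
    rw [← Finset.centerMass_eq_of_sum_1 _ _ hw₁]
    exact s.centerMass_mem_convexHull hw₀ (by rw [hw₁]; exact one_pos)
      fun i hi => Set.mem_image_of_mem φ hi

theorem mem_smul_convexHull_image_iff {s : Finset ι} (hs : s.Nonempty) {c : ℝ} (hc : 0 ≤ c)
    {φ : ι → E} {p : E} :
    p ∈ c • convexHull ℝ (φ '' s) ↔
      ∃ w : ι → ℝ, (∀ i ∈ s, 0 ≤ w i) ∧ ∑ i ∈ s, w i = c ∧ ∑ i ∈ s, w i • φ i = p := by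
  constructor
  · rintro ⟨q, hq, rfl⟩
    obtain ⟨w, hw₀, hw₁, rfl⟩ := mem_convexHull_image_iff.mp hq
    refine ⟨c • w, fun i hi => mul_nonneg hc (hw₀ i hi), ?_, ?_⟩
    · simp [← Finset.mul_sum, hw₁]
    · simp [mul_smul, Finset.smul_sum]
  · rintro ⟨w, hw₀, hwc, rfl⟩
    rcases hc.eq_or_lt with rfl | hc
    · have hw : ∀ i ∈ s, w i = 0 := (Finset.sum_eq_zero_iff_of_nonneg hw₀).mp hwc
      obtain ⟨i, hi⟩ := hs
      refine ⟨φ i, subset_convexHull ℝ _ (Set.mem_image_of_mem φ hi), ?_⟩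
      rw [Finset.sum_eq_zero fun i hi => by rw [hw i hi, zero_smul]]
      exact zero_smul ℝ (φ i)
    · refine ⟨c⁻¹ • ∑ i ∈ s, w i • φ i, mem_convexHull_image_iff.mpr
        ⟨c⁻¹ • w, fun i hi => mul_nonneg (inv_nonneg.mpr hc.le) (hw₀ i hi), ?_, ?_⟩, ?_⟩
      · simp [← Finset.mul_sum, hwc, hc.ne']
      · simp [mul_smul, Finset.smul_sum]
      · simp [smul_smul, hc.ne']

theorem Finset.sum_smul_eq_add_sum_erase_smul_sub [DecidableEq ι] (s : Finset ι) (w : ι → ℝ)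
    (φ : ι → E) (i₀ : ι) :
    ∑ i ∈ s, w i • φ i = (∑ i ∈ s, w i) • φ i₀ + ∑ i ∈ s.erase i₀, w i • (φ i - φ i₀) := by
  rw [Finset.sum_erase s (by simp), Finset.sum_smul, ← Finset.sum_add_distrib]
  exact Finset.sum_congr rfl fun i _ => by rw [smul_sub]; abel

theorem mem_smul_convexHull_image_iff_erase [DecidableEq ι] {s : Finset ι} {i₀ : ι}
    (hi₀ : i₀ ∈ s) {c : ℝ} (hc : 0 ≤ c) {φ : ι → E} {p : E} :
    p ∈ c • convexHull ℝ (φ '' s) ↔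
      ∃ w : s.erase i₀ → ℝ, (∀ u, 0 ≤ w u) ∧ ∑ u, w u ≤ c ∧
        p = c • φ i₀ + ∑ u, w u • (φ u - φ i₀) := by
  rw [mem_smul_convexHull_image_iff ⟨i₀, hi₀⟩ hc]
  constructor
  · rintro ⟨w, hw₀, hwc, rfl⟩
    refine ⟨fun u => w u, fun u => hw₀ u (Finset.mem_of_mem_erase u.2), ?_, ?_⟩
    · rw [Finset.sum_coe_sort (s.erase i₀) w]
      linarith [Finset.sum_erase_add s w hi₀, hw₀ i₀ hi₀]
    · rw [Finset.sum_coe_sort (s.erase i₀) fun i => w i • (φ i - φ i₀), ← hwc]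
      exact s.sum_smul_eq_add_sum_erase_smul_sub w φ i₀
  · rintro ⟨w, hw₀, hwc, rfl⟩
    set w' : ι → ℝ := fun i => if h : i ∈ s.erase i₀ then w ⟨i, h⟩ else c - ∑ u, w u
    have hw'₀ : w' i₀ = c - ∑ u, w u := dif_neg (Finset.notMem_erase i₀ s)
    have hw' : ∀ u : s.erase i₀, w' u = w u := fun u => dif_pos u.2
    have hsum : ∑ i ∈ s, w' i = c := by
      rw [← Finset.add_sum_erase s w' hi₀, ← Finset.sum_coe_sort, hw'₀]
      simp only [hw', sub_add_cancel]
    refine ⟨w', fun i hi => ?_, hsum, ?_⟩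
    · by_cases h : i ∈ s.erase i₀
      · exact (hw' ⟨i, h⟩).symm ▸ hw₀ _
      · simp only [w', dif_neg h]; linarith
    · rw [s.sum_smul_eq_add_sum_erase_smul_sub w' φ i₀, hsum, ← Finset.sum_coe_sort]
      simp only [hw']

end Convex

section Polysimplex

variable {d : ℕ} {η : Type*}

abbrev EdgeIndex (V : η → Finset (Fin d → ℤ)) (v₀ : η → Fin d → ℤ) :=
  Σ j, (V j).erase (v₀ j)

def edge (V : η → Finset (Fin d → ℤ)) (v₀ : η → Fin d → ℤ) (i : EdgeIndex V v₀) : Fin d → ℤ :=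
  i.2.1 - v₀ i.1

lemma castH_edge {V : η → Finset (Fin d → ℤ)} {v₀ : η → Fin d → ℤ} (i : EdgeIndex V v₀) :
    castH (edge V v₀ i) = castH i.2.1 - castH (v₀ i.1) :=
  map_sub _ _ _

variable [Fintype η]

def dilatedSum (V : η → Finset (Fin d → ℤ)) (c : η → ℕ) : Set (Fin d → ℝ) :=
  ∑ j, (c j : ℝ) • convexHull ℝ (castH '' (V j : Set (Fin d → ℤ)))

variable {V : η → Finset (Fin d → ℤ)} {v₀ : η → Fin d → ℤ}

theorem mem_dilatedSum_iff (hv₀ : ∀ j, v₀ j ∈ V j) (c : η → ℕ) {p : Fin d → ℝ} :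
    p ∈ dilatedSum V c ↔ ∃ w : EdgeIndex V v₀ → ℝ, (∀ i, 0 ≤ w i) ∧
      (∀ j, ∑ u, w ⟨j, u⟩ ≤ c j) ∧
      p = ∑ j, (c j : ℝ) • castH (v₀ j) + ∑ i, w i • castH (edge V v₀ i) := by
  simp only [dilatedSum, Set.mem_fintype_sum,
    mem_smul_convexHull_image_iff_erase (hv₀ _) (Nat.cast_nonneg _), Fintype.sum_sigma,
    castH_edge, ← Finset.sum_add_distrib]
  constructor
  · rintro ⟨g, hg, rfl⟩
    choose w hw₀ hwc hg using hg
    exact ⟨fun i => w i.1 i.2, fun i => hw₀ _ _, hwc, Finset.sum_congr rfl fun j _ => hg j⟩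
  · rintro ⟨w, hw₀, hwc, rfl⟩
    exact ⟨_, fun j => ⟨fun u => w ⟨j, u⟩, fun u => hw₀ _, hwc j, rfl⟩, rfl⟩

end Polysimplex

section Lattice

variable {d : ℕ} {η : Type*} {V : η → Finset (Fin d → ℤ)} {v₀ : η → Fin d → ℤ}

lemma sub_mem_span_edge {j : η} {v w : Fin d → ℤ} (hv : v ∈ V j) (hw : w ∈ V j) :
    v - w ∈ Submodule.span ℤ (Set.range (edge V v₀)) := by
  have hbase : ∀ v ∈ V j, v - v₀ j ∈ Submodule.span ℤ (Set.range (edge V v₀)) := by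
    intro v hv
    by_cases h : v = v₀ j
    · simp [h]
    · exact Submodule.subset_span ⟨⟨j, v, Finset.mem_erase.mpr ⟨h, hv⟩⟩, rfl⟩
  simpa using sub_mem (hbase v hv) (hbase w hw)

lemma mem_span_edge_of_zero_mem_affLat {j : η} (hv₀ : v₀ j ∈ V j) (h0 : 0 ∈ affLat (V j)) :
    v₀ j ∈ Submodule.span ℤ (Set.range (edge V v₀)) := by
  obtain ⟨a, ha₁, ha₀⟩ := h0
  have : v₀ j = ∑ v ∈ V j, a v • (v₀ j - v) := by
    simp only [smul_sub, Finset.sum_sub_distrib, ← Finset.sum_smul, ha₁, ha₀, one_smul, sub_zero]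
  rw [this]
  exact Submodule.sum_mem _ fun v hv => Submodule.smul_mem _ _ (sub_mem_span_edge hv₀ hv)

theorem closure_iUnion_eq_span_edge (hv₀ : ∀ j, v₀ j ∈ V j) (h0 : ∀ j, 0 ∈ affLat (V j)) :
    AddSubgroup.closure (⋃ j, (V j : Set (Fin d → ℤ))) =
      (Submodule.span ℤ (Set.range (edge V v₀))).toAddSubgroup := by
  refine le_antisymm ((AddSubgroup.closure_le _).mpr ?_) ?_
  · intro v hv
    obtain ⟨j, hv⟩ := Set.mem_iUnion.mp hv
    rw [← sub_add_cancel v (v₀ j)]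
    exact add_mem (sub_mem_span_edge hv (hv₀ j)) (mem_span_edge_of_zero_mem_affLat (hv₀ j) (h0 j))
  · rw [Submodule.span_int_eq_addSubgroupClosure, AddSubgroup.closure_le]
    rintro _ ⟨⟨j, u, hu⟩, rfl⟩
    have hmem : ∀ v ∈ V j, v ∈ AddSubgroup.closure (⋃ j, (V j : Set (Fin d → ℤ))) :=
      fun v hv => AddSubgroup.subset_closure (Set.mem_iUnion.mpr ⟨j, hv⟩)
    exact sub_mem (hmem u (Finset.mem_of_mem_erase hu)) (hmem _ (hv₀ j))

end Lattice

section Coordinates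

variable {σ κ : Type*} [Fintype κ] {b : κ → σ → ℤ}

lemma exists_castH_eq_sum_of_mem_span {y : σ → ℤ} (hy : y ∈ Submodule.span ℤ (Set.range b)) :
    ∃ k : κ → ℤ, castH y = ∑ i, (k i : ℝ) • castH (b i) := by
  obtain ⟨k, rfl⟩ := (Submodule.mem_span_range_iff_exists_fun ℤ).mp hy
  exact ⟨k, by simp only [map_sum, castH_zsmul]⟩

lemma span_image_castH_span_int_le :
    Submodule.span ℝ (castH '' (Submodule.span ℤ (Set.range b) : Set (σ → ℤ))) ≤
      Submodule.span ℝ (Set.range (castH ∘ b)) := by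
  rw [Submodule.span_le]
  rintro _ ⟨y, hy, rfl⟩
  obtain ⟨k, hk⟩ := exists_castH_eq_sum_of_mem_span hy
  rw [SetLike.mem_coe, hk]
  exact Submodule.sum_mem _ fun i _ => Submodule.smul_mem _ _ (Submodule.subset_span ⟨i, rfl⟩)

lemma exists_int_of_castH_eq_sum (hb : LinearIndependent ℝ (castH ∘ b)) {y : σ → ℤ}
    (hy : y ∈ Submodule.span ℤ (Set.range b)) {s : κ → ℝ}
    (hs : castH y = ∑ i, s i • castH (b i)) : ∃ k : κ → ℤ, ∀ i, s i = k i := by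
  obtain ⟨k, hk⟩ := exists_castH_eq_sum_of_mem_span hy
  exact ⟨k, Fintype.linearIndependent_iffₛ.mp hb s _ (hs.symm.trans hk)⟩

end Coordinates

section Independence

variable {d : ℕ} {η : Type*} {V : η → Finset (Fin d → ℤ)} {v₀ : η → Fin d → ℤ}

theorem linearIndependent_castH_edge (hv₀ : ∀ j, v₀ j ∈ V j)
    (hsimp : ∀ j, AffineIndependent ℝ (fun x : (V j : Set (Fin d → ℤ)) => castH x.1))
    (hindep : iSupIndep fun j => Submodule.span ℝ
      (castH '' {z | ∃ a ∈ V j, ∃ b ∈ V j, z = a - b})) :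
    LinearIndependent ℝ (castH ∘ edge V v₀) := by
  have hblock : ∀ j,
      LinearIndependent ℝ fun u : (V j).erase (v₀ j) => castH (edge V v₀ ⟨j, u⟩) := by
    intro j
    have h := (affineIndependent_iff_linearIndependent_vsub ℝ _ ⟨v₀ j, hv₀ j⟩).mp (hsimp j)
    have hinj : Function.Injective fun u : (V j).erase (v₀ j) =>
        (⟨⟨u.1, Finset.mem_of_mem_erase u.2⟩, fun h => Finset.ne_of_mem_erase u.2
          (congrArg Subtype.val h)⟩ : {x : (V j : Set (Fin d → ℤ)) // x ≠ ⟨v₀ j, hv₀ j⟩}) :=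
      fun u u' h => Subtype.ext (congrArg (fun x => x.1.1) h)
    simpa only [Function.comp_def, vsub_eq_sub, castH_edge] using h.comp _ hinj
  have hle : (fun j => Submodule.span ℝ (Set.range fun u : (V j).erase (v₀ j) =>
      castH (edge V v₀ ⟨j, u⟩))) ≤ fun j => Submodule.span ℝ
        (castH '' {z | ∃ a ∈ V j, ∃ b ∈ V j, z = a - b}) := by
    refine fun j => Submodule.span_mono ?_
    rintro _ ⟨u, rfl⟩
    exact ⟨_, ⟨u, Finset.mem_of_mem_erase u.2, v₀ j, hv₀ j, rfl⟩, rfl⟩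
  exact linearIndependent_iUnion_finite hblock fun j t _ hjt => (hindep.mono hle).disjoint_biSup hjt

end Independence

section FractionalParts

variable {κ : Type*} [Fintype κ] {a b : κ → ℝ}

lemma Int.fract_le_of_fract_eq {x y : ℝ} (hx : 0 ≤ x) (h : Int.fract x = Int.fract y) :
    Int.fract y ≤ x := by
  rw [← h, ← Int.self_sub_floor]
  have : (0 : ℝ) ≤ ⌊x⌋ := Int.cast_nonneg (Int.floor_nonneg.mpr hx)
  linarith

lemma natCeil_sum_fract_le (ha : ∀ i, 0 ≤ a i) (hab : ∀ i, Int.fract (a i) = Int.fract (b i))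
    {c : ℕ} (hc : ∑ i, a i ≤ c) : ⌈∑ i, Int.fract (b i)⌉₊ ≤ c :=
  Nat.ceil_le.mpr ((Finset.sum_le_sum fun i _ => Int.fract_le_of_fract_eq (ha i) (hab i)).trans hc)

lemma natCeil_sum_fract_le_card (b : κ → ℝ) : ⌈∑ i, Int.fract (b i)⌉₊ ≤ Fintype.card κ :=
  Nat.ceil_le.mpr <| by
    simpa using Finset.sum_le_sum fun i (_ : i ∈ Finset.univ) => (Int.fract_lt_one (b i)).le

lemma eq_fract_of_sum_le_natCeil (ha : ∀ i, 0 ≤ a i)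
    (hab : ∀ i, Int.fract (a i) = Int.fract (b i)) (hc : ∑ i, a i ≤ ⌈∑ i, Int.fract (b i)⌉₊) :
    ∀ i, a i = Int.fract (b i) := by
  have hsplit : ∀ i, a i = Int.fract (b i) + ⌊a i⌋ := fun i => by rw [← hab, Int.fract_add_floor]
  have hfloor₀ : ∀ i ∈ Finset.univ, 0 ≤ ⌊a i⌋ := fun i _ => Int.floor_nonneg.mpr (ha i)
  have hlt : ((∑ i, ⌊a i⌋ : ℤ) : ℝ) < 1 := by
    have hceil := Nat.ceil_lt_add_one (Finset.sum_nonneg fun i (_ : i ∈ Finset.univ) =>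
      Int.fract_nonneg (b i))
    rw [Finset.sum_congr rfl fun i _ => hsplit i, Finset.sum_add_distrib] at hc
    push_cast
    linarith
  have hzero : ∑ i, ⌊a i⌋ = 0 := by
    have := Finset.sum_nonneg hfloor₀
    have : ∑ i, ⌊a i⌋ < 1 := by exact_mod_cast hlt
    omega
  intro i
  rw [hsplit i, (Finset.sum_eq_zero_iff_of_nonneg hfloor₀).mp hzero i (Finset.mem_univ i)]
  simp

end FractionalParts

section Representatives

variable {d : ℕ} {η : Type*} [Fintype η] {V : η → Finset (Fin d → ℤ)} {v₀ : η → Fin d → ℤ}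
  {x : Fin d → ℤ} {t : EdgeIndex V v₀ → ℝ}

theorem exists_coords_of_mem_dilatedSum (hv₀ : ∀ j, v₀ j ∈ V j) (h0 : ∀ j, 0 ∈ affLat (V j))
    (hli : LinearIndependent ℝ (castH ∘ edge V v₀))
    (ht : castH x = ∑ i, t i • castH (edge V v₀ i)) {c : η → ℕ} {z : Fin d → ℤ}
    (hzx : z - x ∈ Submodule.span ℤ (Set.range (edge V v₀))) (hz : castH z ∈ dilatedSum V c) :
    ∃ w : EdgeIndex V v₀ → ℝ, (∀ i, 0 ≤ w i) ∧ (∀ j, ∑ u, w ⟨j, u⟩ ≤ c j) ∧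
      (∀ i, Int.fract (w i) = Int.fract (t i)) ∧
      castH z = ∑ j, (c j : ℝ) • castH (v₀ j) + ∑ i, w i • castH (edge V v₀ i) := by
  obtain ⟨w, hw₀, hwc, hzw⟩ := (mem_dilatedSum_iff hv₀ c).mp hz
  have hbase : ∑ j, c j • v₀ j ∈ Submodule.span ℤ (Set.range (edge V v₀)) :=
    Submodule.sum_mem _ fun j _ =>
      Submodule.smul_of_tower_mem _ _ (mem_span_edge_of_zero_mem_affLat (hv₀ j) (h0 j))
  obtain ⟨k, hk⟩ := exists_int_of_castH_eq_sum hli (sub_mem hzx hbase) (s := w - t) (by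
    simp only [map_sub, map_sum, castH_nsmul, hzw, ht, Pi.sub_apply, sub_smul,
      Finset.sum_sub_distrib]
    abel)
  refine ⟨w, hw₀, hwc, fun i => ?_, hzw⟩
  rw [show w i = t i + k i by linarith [show w i - t i = k i from hk i], Int.fract_add_intCast]

theorem exists_mem_dilatedSum_of_coords (hv₀ : ∀ j, v₀ j ∈ V j) (h0 : ∀ j, 0 ∈ affLat (V j))
    (ht : castH x = ∑ i, t i • castH (edge V v₀ i)) {c : η → ℕ} {w : EdgeIndex V v₀ → ℝ}
    (hw₀ : ∀ i, 0 ≤ w i) (hwc : ∀ j, ∑ u, w ⟨j, u⟩ ≤ c j)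
    (hwt : ∀ i, Int.fract (w i) = Int.fract (t i)) :
    ∃ z : Fin d → ℤ, z - x ∈ Submodule.span ℤ (Set.range (edge V v₀)) ∧
      castH z ∈ dilatedSum V c ∧
      castH z = ∑ j, (c j : ℝ) • castH (v₀ j) + ∑ i, w i • castH (edge V v₀ i) := by
  set z := x + ∑ j, c j • v₀ j + ∑ i, (⌊w i⌋ - ⌊t i⌋) • edge V v₀ i with hzdef
  have hz : castH z = ∑ j, (c j : ℝ) • castH (v₀ j) + ∑ i, w i • castH (edge V v₀ i) := by
    have hcoord : ∀ i, t i + (⌊w i⌋ - ⌊t i⌋ : ℤ) = w i := fun i => by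
      push_cast
      linarith [hwt i, Int.fract_add_floor (w i), Int.fract_add_floor (t i)]
    simp only [z, map_add, map_sum, castH_nsmul, castH_zsmul, ht]
    rw [add_right_comm, ← Finset.sum_add_distrib, add_comm]
    simp only [← add_smul, hcoord]
  refine ⟨z, ?_, (mem_dilatedSum_iff hv₀ c).mpr ⟨w, hw₀, hwc, hz⟩, hz⟩
  rw [hzdef, add_assoc, add_sub_cancel_left]
  refine add_mem (Submodule.sum_mem _ fun j _ => ?_) (Submodule.sum_mem _ fun i _ => ?_)
  · exact Submodule.smul_of_tower_mem _ _ (mem_span_edge_of_zero_mem_affLat (hv₀ j) (h0 j))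
  · exact Submodule.smul_mem _ _ (Submodule.subset_span ⟨i, rfl⟩)

end Representatives

theorem stmt_3_general (d n : ℕ) (V : Fin n → Finset (Fin d → ℤ))
    (hV : ∀ j, (V j).Nonempty)
    (hsimp : ∀ j, AffineIndependent ℝ (fun x : (V j : Set (Fin d → ℤ)) => castH x.1))
    (hindep : iSupIndep (fun j => Submodule.span ℝ
      (castH '' {z | ∃ a ∈ V j, ∃ b ∈ V j, z = a - b})))
    (h0 : ∀ j, (0 : Fin d → ℤ) ∈ affLat (V j))
    (LP : AddSubgroup (Fin d → ℤ))
    (hLP : LP = AddSubgroup.closure (⋃ j, (V j : Set (Fin d → ℤ))))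
    (x : Fin d → ℤ)
    (hx : castH x ∈ Submodule.span ℝ (castH '' (LP : Set (Fin d → ℤ)))) :
    ∃ c : Fin n → ℕ,
      -- `∑ⱼ cⱼPⱼ` contains a representative of `m`
      (∃ z : Fin d → ℤ, z - x ∈ LP ∧
        castH z ∈ ∑ j, (c j : ℝ) • (convexHull ℝ (castH '' (V j : Set (Fin d → ℤ))))) ∧
      -- minimality in the coordinatewise product order
      (∀ c' : Fin n → ℕ,
        (∃ z : Fin d → ℤ, z - x ∈ LP ∧
          castH z ∈ ∑ j, (c' j : ℝ) • (convexHull ℝ (castH '' (V j : Set (Fin d → ℤ))))) →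
        ∀ j, c j ≤ c' j) ∧
      -- `cⱼ ≤ dim Pⱼ`
      (∀ j, c j ≤ (V j).card - 1) ∧
      -- uniqueness of the representative for the minimal tuple
      (∃! z : Fin d → ℤ, z - x ∈ LP ∧
        castH z ∈ ∑ j, (c j : ℝ) • (convexHull ℝ (castH '' (V j : Set (Fin d → ℤ))))) := by
  choose v₀ hv₀ using hV
  rw [closure_iUnion_eq_span_edge hv₀ h0] at hLP
  subst hLP
  obtain ⟨t, ht⟩ := (Submodule.mem_span_range_iff_exists_fun ℝ).mp
    (span_image_castH_span_int_le hx)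
  have hli := linearIndependent_castH_edge hv₀ hsimp hindep
  obtain ⟨z₀, hz₀x, hz₀, hz₀w⟩ := exists_mem_dilatedSum_of_coords hv₀ h0 ht.symm
    (c := fun j => ⌈∑ u, Int.fract (t ⟨j, u⟩)⌉₊) (fun i => Int.fract_nonneg _)
    (fun j => Nat.le_ceil _) (fun i => Int.fract_fract _)
  refine ⟨_, ⟨z₀, hz₀x, hz₀⟩, ?_, fun j => ?_, ⟨z₀, ⟨hz₀x, hz₀⟩, ?_⟩⟩
  · rintro c ⟨z, hzx, hz⟩ j
    obtain ⟨w, hw₀, hwc, hwt, -⟩ := exists_coords_of_mem_dilatedSum hv₀ h0 hli ht.symm hzx hz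
    exact natCeil_sum_fract_le (fun u => hw₀ _) (fun u => hwt _) (hwc j)
  · simpa [Finset.card_erase_of_mem (hv₀ j)] using natCeil_sum_fract_le_card fun u => t ⟨j, u⟩
  · rintro z ⟨hzx, hz⟩
    obtain ⟨w, hw₀, hwc, hwt, hzw⟩ := exists_coords_of_mem_dilatedSum hv₀ h0 hli ht.symm hzx hz
    have hw : w = fun i => Int.fract (t i) := funext fun ⟨j, u⟩ =>
      eq_fract_of_sum_le_natCeil (fun u => hw₀ _) (fun u => hwt _) (hwc j) u
    exact castH_injective (by rw [hzw, hz₀w, hw])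

/-- box points: let `P₁, …, Pₙ` be an affinely independent family of
lattice simplices in `ℤ^d` (vertex sets `V j`, each `L_{Pⱼ}` containing the origin),
and let `m` be a nonzero element of `G_P = (ℤ^d ∩ (L_P ⊗ ℝ))/L_P`, represented by
`x ∈ ℤ^d ∩ (L_P ⊗ ℝ)`, `x ∉ L_P`.  Then there is a unique minimal tuple
`(c₁, …, cₙ)` of nonnegative integers such that `∑ⱼ cⱼPⱼ` contains a representative
of `m`; it satisfies `cⱼ ≤ dim Pⱼ` for all `j`, and the representative for the
minimal tuple is unique. -/
theorem stmt_3 (d n : ℕ) (V : Fin n → Finset (Fin d → ℤ))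
    (hV : ∀ j, (V j).Nonempty)
    (hsimp : ∀ j, AffineIndependent ℝ (fun x : (V j : Set (Fin d → ℤ)) => castH x.1))
    (hindep : iSupIndep (fun j => Submodule.span ℝ
      (castH '' {z | ∃ a ∈ V j, ∃ b ∈ V j, z = a - b})))
    (h0 : ∀ j, (0 : Fin d → ℤ) ∈ affLat (V j))
    (LP : AddSubgroup (Fin d → ℤ))
    (hLP : LP = AddSubgroup.closure (⋃ j, (V j : Set (Fin d → ℤ))))
    (x : Fin d → ℤ)
    (hx : castH x ∈ Submodule.span ℝ (castH '' (LP : Set (Fin d → ℤ))))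
    (hxn : x ∉ LP) :
    ∃ c : Fin n → ℕ,
      -- `∑ⱼ cⱼPⱼ` contains a representative of `m`
      (∃ z : Fin d → ℤ, z - x ∈ LP ∧
        castH z ∈ ∑ j, (c j : ℝ) • (convexHull ℝ (castH '' (V j : Set (Fin d → ℤ))))) ∧
      -- minimality in the coordinatewise product order
      (∀ c' : Fin n → ℕ,
        (∃ z : Fin d → ℤ, z - x ∈ LP ∧
          castH z ∈ ∑ j, (c' j : ℝ) • (convexHull ℝ (castH '' (V j : Set (Fin d → ℤ))))) →
        ∀ j, c j ≤ c' j) ∧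
      -- `cⱼ ≤ dim Pⱼ`
      (∀ j, c j ≤ (V j).card - 1) ∧
      -- uniqueness of the representative for the minimal tuple
      (∃! z : Fin d → ℤ, z - x ∈ LP ∧
        castH z ∈ ∑ j, (c j : ℝ) • (convexHull ℝ (castH '' (V j : Set (Fin d → ℤ))))) :=
  stmt_3_general d n V hV hsimp hindep h0 LP hLP x hx
end
end

section
/- With notation as in the two-piece Cayley subdivision (Q₁ = 𝒞((AP)[i, v + A'ᵢP]) and Q₂ = 𝒞((AF)[i, conv((v+A'ᵢF) ∪ (AᵢF))]) subdividing 𝒞(AP)): there is a lattice polytope isomorphism φ₁ : 𝒞(A'P) → Q₁ given by translation by v in the i-th Cayley slice, and an affine isomorphism φ₂ : 𝒞(A''F) → Q₂, where A'' is obtained from A by inserting the row A'ᵢ above the i-th row; moreover Q₁ and Q₂ have all vertices in L_P × Λ^{m-1}. -/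
open Pointwise

/-- Coordinatewise cast `ℤ → ℝ`. -/
def castF {ι : Type*} (z : ι → ℤ) : ι → ℝ := fun i => (z i : ℝ)

/-- Cast of a pair of integer vectors. -/
def castP {ι κ : Type*} (z : (ι → ℤ) × (κ → ℤ)) : (ι → ℝ) × (κ → ℝ) :=
  (castF z.1, castF z.2)

/-- The lattice polytope with vertex set `V`, as a subset of `ℝ^d`. -/
def pset {d : ℕ} (V : Finset (Fin d → ℤ)) : Set (Fin d → ℝ) :=
  convexHull ℝ (castF '' (V : Set (Fin d → ℤ)))

/-- The Minkowski sum `∑ⱼ rⱼ Pⱼ`. -/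
def rowSet {d n : ℕ} (V : Fin n → Finset (Fin d → ℤ)) (r : Fin n → ℕ) :
    Set (Fin d → ℝ) :=
  ∑ j, (r j : ℝ) • pset (V j)

/-- The Cayley polytope `𝒞(Q₁, …, Qₘ) = conv(⋃ᵢ Qᵢ × eᵢ)`. -/
def cayley {d : ℕ} {ι : Type*} [Fintype ι] [DecidableEq ι]
    (Q : ι → Set (Fin d → ℝ)) : Set ((Fin d → ℝ) × (ι → ℝ)) :=
  convexHull ℝ (⋃ i, (fun x => (x, (Pi.single i 1 : ι → ℝ))) '' Q i)

/-!
Both maps are linear, so they carry the Cayley polytope `conv ⋃ₖ Rₖ × {eₖ}` to the convex hull of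
the images of its slices. `φ₁` shifts the `i`-th slice by `v` and fixes the others; `φ₂` first
shifts the new `i`-th slice by `v` and then merges it with the next one. For injectivity of `φ₂`
on `𝒞(A''F)`, the simplices `Pⱼ` are affinely independent and their direction spaces are
independent, so some linear functional `ℓ` is constant on every facet `Fⱼ'` and is one larger at
`v` than on `Fⱼ`. Then `ℓ` is constant on each slice of the sheared polytope, with different
values on the two slices being merged; this linear relation pins down the coefficient lost in
the merge. The vertices of all the polytopes involved are sums of vertices of the `Pⱼ`, plus
possibly `v`, so they lie in `L_P`.
-/

def castAddHom (ι : Type*) : (ι → ℤ) →+ (ι → ℝ) := (Int.castAddHom ℝ).compLeft ι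

theorem coe_castAddHom (ι : Type*) : ⇑(castAddHom ι) = castF := rfl

theorem castF_injective {ι : Type*} : Function.Injective (castF (ι := ι)) :=
  Int.cast_injective.comp_left

theorem vectorSpan_image_castF {d : ℕ} (V : Finset (Fin d → ℤ)) :
    vectorSpan ℝ (castF '' (V : Set (Fin d → ℤ))) =
      Submodule.span ℝ (castF '' {z | ∃ a ∈ V, ∃ b ∈ V, z = a - b}) := by
  rw [vectorSpan_def]
  congr 1
  ext x
  simp only [Set.mem_vsub, Set.mem_image, Set.mem_ofPred_eq, Finset.mem_coe, vsub_eq_sub]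
  constructor
  · rintro ⟨_, ⟨a, ha, rfl⟩, _, ⟨b, hb, rfl⟩, rfl⟩
    exact ⟨a - b, ⟨a, ha, b, hb, rfl⟩, by rw [← coe_castAddHom, map_sub]⟩
  · rintro ⟨_, ⟨a, ha, b, hb, rfl⟩, rfl⟩
    exact ⟨_, ⟨a, ha, rfl⟩, _, ⟨b, hb, rfl⟩, by rw [← coe_castAddHom, map_sub]⟩

section LatticePolytope

variable {E : Type*} [AddCommGroup E] [Module ℝ E]

def IsLatticePolytope (L : AddSubgroup E) (P : Set E) : Prop :=
  ∃ T : Set E, T.Finite ∧ T ⊆ L ∧ P = convexHull ℝ T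

namespace IsLatticePolytope

variable {L : AddSubgroup E} {P P' : Set E}

theorem convexHull_of_finite {T : Set E} (hT : T.Finite) (hTL : T ⊆ L) :
    IsLatticePolytope L (convexHull ℝ T) :=
  ⟨T, hT, hTL, rfl⟩

theorem zero : IsLatticePolytope L 0 :=
  ⟨0, Set.finite_zero, by simp, by simp⟩

theorem add (h : IsLatticePolytope L P) (h' : IsLatticePolytope L P') :
    IsLatticePolytope L (P + P') := by
  obtain ⟨T, hT, hTL, rfl⟩ := h
  obtain ⟨T', hT', hTL', rfl⟩ := h'
  refine ⟨T + T', hT.add hT', ?_, (convexHull_add T T').symm⟩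
  rintro _ ⟨x, hx, y, hy, rfl⟩
  exact L.add_mem (hTL hx) (hTL' hy)

theorem natCast_smul (h : IsLatticePolytope L P) (n : ℕ) :
    IsLatticePolytope L ((n : ℝ) • P) := by
  obtain ⟨T, hT, hTL, rfl⟩ := h
  refine ⟨(n : ℝ) • T, hT.smul_set, ?_, (convexHull_smul _ T).symm⟩
  rintro _ ⟨x, hx, rfl⟩
  simpa only [SetLike.mem_coe, Nat.cast_smul_eq_nsmul] using L.nsmul_mem (hTL hx) n

theorem sum {ι : Type*} (s : Finset ι) {P : ι → Set E} (h : ∀ k ∈ s, IsLatticePolytope L (P k)) :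
    IsLatticePolytope L (∑ k ∈ s, P k) :=
  Finset.sum_induction P _ (fun _ _ => add) zero h

theorem vadd (h : IsLatticePolytope L P) {c : E} (hc : c ∈ L) :
    IsLatticePolytope L ((c + ·) '' P) := by
  obtain ⟨T, hT, hTL, rfl⟩ := h
  refine ⟨c +ᵥ T, hT.vadd_set, ?_, ?_⟩
  · rintro _ ⟨x, hx, rfl⟩
    exact L.add_mem hc (hTL hx)
  · rw [convexHull_vadd, ← Set.image_vadd]
    rfl

theorem convexHull_union (h : IsLatticePolytope L P) (h' : IsLatticePolytope L P') :
    IsLatticePolytope L (convexHull ℝ (P ∪ P')) := by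
  obtain ⟨T, hT, hTL, rfl⟩ := h
  obtain ⟨T', hT', hTL', rfl⟩ := h'
  refine ⟨T ∪ T', hT.union hT', Set.union_subset hTL hTL', ?_⟩
  rw [convexHull_convexHull_union_left, convexHull_convexHull_union_right]

end IsLatticePolytope

end LatticePolytope

theorem isLatticePolytope_rowSet {d n : ℕ} {L : AddSubgroup (Fin d → ℝ)}
    (V : Fin n → Finset (Fin d → ℤ)) (hV : ∀ j, castF '' (V j : Set (Fin d → ℤ)) ⊆ L)
    (r : Fin n → ℕ) : IsLatticePolytope L (rowSet V r) :=
  IsLatticePolytope.sum _ fun j _ =>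
    (IsLatticePolytope.convexHull_of_finite ((V j).finite_toSet.image _) (hV j)).natCast_smul _

theorem image_castF_subset_map_closure {d n : ℕ} (V : Fin n → Finset (Fin d → ℤ))
    {W : Finset (Fin d → ℤ)} {j : Fin n} (hW : W ⊆ V j) :
    castF '' (W : Set (Fin d → ℤ)) ⊆
      (AddSubgroup.closure (⋃ j', (V j' : Set (Fin d → ℤ)))).map (castAddHom (Fin d)) :=
  Set.image_subset_iff.2 fun _ hw => AddSubgroup.mem_map_of_mem _
    (AddSubgroup.subset_closure (Set.mem_iUnion_of_mem j (hW hw)))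

theorem image_convexHull_prodMk {E F : Type*} [AddCommGroup E] [Module ℝ E] [AddCommGroup F]
    [Module ℝ F] (e : F) (T : Set E) :
    (fun x => (x, e)) '' convexHull ℝ T = convexHull ℝ ((fun x => (x, e)) '' T) := by
  rw [← Set.prod_singleton, ← Set.prod_singleton, convexHull_prod, convexHull_singleton]

section Cayley

variable {d : ℕ} {ι : Type*}

def shear (i : ι) (c : Fin d → ℝ) : (Fin d → ℝ) × (ι → ℝ) →ₗ[ℝ] (Fin d → ℝ) × (ι → ℝ) where
  toFun p := (p.1 + p.2 i • c, p.2)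
  map_add' p q := by
    ext <;> simp only [Prod.fst_add, Prod.snd_add, Pi.add_apply, add_smul]
    abel
  map_smul' a p := by
    ext <;> simp [smul_add, smul_smul]

theorem shear_bijective (i : ι) (c : Fin d → ℝ) : Function.Bijective (shear i c) :=
  Function.bijective_iff_has_inverse.2
    ⟨shear i (-c), fun p => by simp [shear], fun p => by simp [shear]⟩

variable [Fintype ι] [DecidableEq ι]

theorem cayley_convexHull (T : ι → Set (Fin d → ℝ)) :
    cayley (fun i => convexHull ℝ (T i)) = cayley T := by
  simp only [cayley, image_convexHull_prodMk]
  exact (convexHull ℝ).closure_iSup_closure _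

theorem cayley_update_convexHull (Q : ι → Set (Fin d → ℝ)) (i : ι) (S : Set (Fin d → ℝ)) :
    cayley (Function.update Q i (convexHull ℝ S)) = cayley (Function.update Q i S) := by
  rw [← cayley_convexHull (Function.update Q i S), ← cayley_convexHull (Function.update Q i _)]
  congr 1
  funext k
  rcases eq_or_ne k i with rfl | hk
  · simp
  · simp [hk]

theorem image_cayley {κ : Type*} [Fintype κ] [DecidableEq κ]
    (f : (Fin d → ℝ) × (ι → ℝ) →ₗ[ℝ] (Fin d → ℝ) × (κ → ℝ)) (Q : ι → Set (Fin d → ℝ)) :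
    f '' cayley Q = convexHull ℝ (⋃ i, f '' ((fun x => (x, (Pi.single i 1 : ι → ℝ))) '' Q i)) := by
  rw [cayley, f.image_convexHull, Set.image_iUnion]

theorem shear_image_cayley (Q : ι → Set (Fin d → ℝ)) (i : ι) (c : Fin d → ℝ) :
    shear i c '' cayley Q = cayley (Function.update Q i ((c + ·) '' Q i)) := by
  rw [image_cayley, cayley]
  refine congrArg _ (Set.iUnion_congr fun k => ?_)
  rw [Set.image_image]
  rcases eq_or_ne k i with rfl | hk
  · rw [Function.update_self, Set.image_image]
    exact Set.image_congr fun x _ => by simp [shear, add_comm]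
  · rw [Function.update_of_ne hk]
    exact Set.image_congr fun x _ => by simp [shear, hk]

theorem cayley_eq_convexHull_castP (G : AddSubgroup (Fin d → ℤ))
    (Q : ι → Set (Fin d → ℝ)) (hQ : ∀ k, IsLatticePolytope (G.map (castAddHom _)) (Q k)) :
    ∃ S : Set ((Fin d → ℝ) × (ι → ℝ)), S.Finite ∧
      S ⊆ {p | ∃ z : (Fin d → ℤ) × (ι → ℤ), p = castP z ∧ z.1 ∈ G ∧ ∑ k, z.2 k = 1} ∧
      cayley Q = convexHull ℝ S := by
  choose T hT hTG hQT using hQ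
  refine ⟨⋃ k, (fun x => (x, (Pi.single k 1 : ι → ℝ))) '' T k,
    Set.finite_iUnion fun k => (hT k).image _, ?_, ?_⟩
  · rintro _ ⟨_, ⟨k, rfl⟩, x, hx, rfl⟩
    obtain ⟨z, hz, rfl⟩ := hTG k hx
    refine ⟨(z, Pi.single k 1), Prod.ext rfl (funext fun k' => ?_), hz, by simp⟩
    simp [castP, castF, Pi.single_apply]
  · rw [show Q = fun k => convexHull ℝ (T k) from funext hQT, cayley_convexHull, cayley]

end Cayley

theorem LinearMap.apply_eq_of_mem_convexHull {E : Type*} [AddCommGroup E] [Module ℝ E]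
    (ℓ : E →ₗ[ℝ] ℝ) {S : Set E} {c : ℝ} (h : ∀ x ∈ S, ℓ x = c) {x : E}
    (hx : x ∈ convexHull ℝ S) : ℓ x = c :=
  convexHull_min h (convex_hyperplane ℓ.isLinear c) hx

theorem apply_eq_of_mem_rowSet {d n : ℕ} (ℓ : (Fin d → ℝ) →ₗ[ℝ] ℝ) (V : Fin n → Finset (Fin d → ℤ))
    (γ : Fin n → ℝ) (hγ : ∀ j, ∀ w ∈ V j, ℓ (castF w) = γ j) (r : Fin n → ℕ) {x : Fin d → ℝ}
    (hx : x ∈ rowSet V r) : ℓ x = ∑ j, (r j : ℝ) * γ j := by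
  obtain ⟨g, hg, rfl⟩ := (Set.mem_finsetSum _ _ _).1 hx
  rw [map_sum]
  refine Finset.sum_congr rfl fun j _ => ?_
  obtain ⟨y, hy, hgy⟩ := hg (Finset.mem_univ j)
  rw [← hgy, map_smul, smul_eq_mul, ℓ.apply_eq_of_mem_convexHull ?_ hy]
  rintro _ ⟨w, hw, rfl⟩
  exact hγ j w hw

theorem apply_fst_eq_of_mem_cayley {d : ℕ} {ι : Type*} [Fintype ι] [DecidableEq ι]
    (ℓ : (Fin d → ℝ) →ₗ[ℝ] ℝ) (Q : ι → Set (Fin d → ℝ)) (c : ι → ℝ)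
    (h : ∀ k, ∀ x ∈ Q k, ℓ x = c k) {p : (Fin d → ℝ) × (ι → ℝ)} (hp : p ∈ cayley Q) :
    ℓ p.1 = ∑ k, p.2 k * c k := by
  have hlin : IsLinearMap ℝ fun p : (Fin d → ℝ) × (ι → ℝ) => ℓ p.1 - ∑ k, p.2 k * c k :=
    ⟨fun p q => by simp only [Prod.fst_add, Prod.snd_add, Pi.add_apply, map_add, add_mul,
        Finset.sum_add_distrib]; ring,
     fun a p => by simp only [Prod.smul_fst, Prod.smul_snd, Pi.smul_apply, map_smul, smul_eq_mul,
        mul_assoc, ← Finset.mul_sum]; ring⟩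
  refine sub_eq_zero.1 (convexHull_min ?_ (convex_hyperplane hlin 0) hp)
  rintro _ ⟨_, ⟨k, rfl⟩, x, hx, rfl⟩
  simp [Pi.single_apply, h k x hx]

theorem iUnion_image_update_union {ι α β : Type*} [DecidableEq ι] (g : ι → α → β)
    (Q : ι → Set α) (i : ι) (S : Set α) :
    ⋃ k, g k '' Function.update Q i (S ∪ Q i) k = g i '' S ∪ ⋃ k, g k '' Q k := by
  ext x
  simp only [Set.mem_union, Set.mem_iUnion]
  constructor
  · rintro ⟨k, hk⟩
    rcases eq_or_ne k i with rfl | hne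
    · rw [Function.update_self, Set.image_union] at hk
      exact hk.imp id fun h => ⟨k, h⟩
    · rw [Function.update_of_ne hne] at hk
      exact Or.inr ⟨k, hk⟩
  · rintro (h | ⟨k, hk⟩)
    · exact ⟨i, by rw [Function.update_self, Set.image_union]; exact Or.inl h⟩
    · rcases eq_or_ne k i with rfl | hne
      · exact ⟨k, by rw [Function.update_self, Set.image_union]; exact Or.inr hk⟩
      · exact ⟨k, by rwa [Function.update_of_ne hne]⟩

section Merge

variable {d m : ℕ}

-- Merges the Cayley coordinates `i.castSucc` and `i.succ` into the coordinate `i`.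
def mergeSlices (i : Fin m) : (Fin d → ℝ) × (Fin (m + 1) → ℝ) →ₗ[ℝ] (Fin d → ℝ) × (Fin m → ℝ) where
  toFun p := (p.1, fun k => (if k = i then p.2 i.castSucc else 0) + p.2 (i.castSucc.succAbove k))
  map_add' p q := by
    ext k
    · rfl
    · by_cases hk : k = i <;> simp [hk, add_add_add_comm]
  map_smul' a p := by
    ext k
    · rfl
    · by_cases hk : k = i <;> simp [hk, mul_add]

theorem mergeSlices_castSucc (i : Fin m) (x : Fin d → ℝ) :
    mergeSlices i (x, Pi.single i.castSucc 1) = (x, Pi.single i 1) := by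
  ext k
  · rfl
  · by_cases hk : k = i <;> simp [mergeSlices, hk, Fin.succAbove_ne]

theorem mergeSlices_succAbove (i k : Fin m) (x : Fin d → ℝ) :
    mergeSlices i (x, Pi.single (i.castSucc.succAbove k) 1) = (x, Pi.single k 1) := by
  ext k'
  · rfl
  · simp [mergeSlices, Pi.single_apply, eq_comm]

theorem mergeSlices_image_cayley (Q : Fin (m + 1) → Set (Fin d → ℝ)) (i : Fin m) :
    mergeSlices i '' cayley Q = cayley (Function.update (fun k => Q (i.castSucc.succAbove k)) i
      (Q i.castSucc ∪ Q (i.castSucc.succAbove i))) := by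
  have hsplit : ∀ g : Fin (m + 1) → Set ((Fin d → ℝ) × (Fin m → ℝ)),
      ⋃ k, g k = g i.castSucc ∪ ⋃ k, g (i.castSucc.succAbove k) := fun g => by
    ext p
    simp only [Set.mem_union, Set.mem_iUnion]
    exact Fin.exists_iff_succAbove _
  rw [image_cayley, cayley, iUnion_image_update_union, hsplit]
  simp only [Set.image_image, mergeSlices_castSucc, mergeSlices_succAbove]

theorem mergeSlices_comp_shear_image_cayley (Q : Fin (m + 1) → Set (Fin d → ℝ))
    (i : Fin m) (c : Fin d → ℝ) :
    (mergeSlices i ∘ shear i.castSucc c) '' cayley Q =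
      cayley (Function.update (fun k => Q (i.castSucc.succAbove k)) i
        (convexHull ℝ ((c + ·) '' Q i.castSucc ∪ Q (i.castSucc.succAbove i)))) := by
  have hoff k : Function.update Q i.castSucc ((c + ·) '' Q i.castSucc) (i.castSucc.succAbove k) =
      Q (i.castSucc.succAbove k) := Function.update_of_ne (Fin.succAbove_ne _ _) _ _
  rw [Set.image_comp, shear_image_cayley, mergeSlices_image_cayley, cayley_update_convexHull]
  simp only [Function.update_self, hoff]

-- The two merged slices lie in distinct parallel hyperplanes, so merging them folds nothing.
theorem injOn_mergeSlices (Q : Fin (m + 1) → Set (Fin d → ℝ)) (i : Fin m)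
    (ℓ : (Fin d → ℝ) →ₗ[ℝ] ℝ) (c : Fin (m + 1) → ℝ) (h : ∀ k, ∀ x ∈ Q k, ℓ x = c k)
    (hc : c i.castSucc ≠ c (i.castSucc.succAbove i)) :
    Set.InjOn (mergeSlices i) (cayley Q) := by
  intro p hp q hq hpq
  set a := i.castSucc
  set b := a.succAbove i
  have hfst : p.1 = q.1 := congr($hpq.1)
  have hmerged k : (if k = i then p.2 a else 0) + p.2 (a.succAbove k) =
      (if k = i then q.2 a else 0) + q.2 (a.succAbove k) := congr($hpq.2 k)
  have hoff : ∀ k ≠ i, p.2 (a.succAbove k) = q.2 (a.succAbove k) := fun k hk => by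
    simpa [hk] using hmerged k
  have hab : p.2 a + p.2 b = q.2 a + q.2 b := by simpa only [if_pos] using hmerged i
  have hlevel : (p.2 a - q.2 a) * c a + (p.2 b - q.2 b) * c b = 0 := by
    have hsum : ∑ k, (p.2 k - q.2 k) * c k = 0 := by
      simp only [sub_mul, Finset.sum_sub_distrib, ← apply_fst_eq_of_mem_cayley ℓ Q c h hp,
        ← apply_fst_eq_of_mem_cayley ℓ Q c h hq, hfst, sub_self]
    rwa [Fin.sum_univ_succAbove _ a, Finset.sum_eq_single i
      (fun k _ hk => by rw [hoff k hk, sub_self, zero_mul]) (by simp)] at hsum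
  have ha : p.2 a = q.2 a := by
    have : (p.2 a - q.2 a) * (c a - c b) = 0 := by linear_combination hlevel - c b * hab
    exact sub_eq_zero.1 ((mul_eq_zero.1 this).resolve_right (sub_ne_zero.2 hc))
  refine Prod.ext hfst (funext fun k => ?_)
  rcases Fin.eq_self_or_eq_succAbove a k with rfl | ⟨k, rfl⟩
  · exact ha
  rcases eq_or_ne k i with rfl | hk
  · linarith
  · exact hoff k hk

theorem injOn_mergeSlices_comp_shear (Q : Fin (m + 1) → Set (Fin d → ℝ)) (i : Fin m)
    (c : Fin d → ℝ) (ℓ : (Fin d → ℝ) →ₗ[ℝ] ℝ) (γ : Fin (m + 1) → ℝ)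
    (h : ∀ k, ∀ x ∈ Q k, ℓ x = γ k) (hc : ℓ c + γ i.castSucc ≠ γ (i.castSucc.succAbove i)) :
    Set.InjOn (mergeSlices i ∘ shear i.castSucc c) (cayley Q) := by
  refine Set.InjOn.comp (injOn_mergeSlices _ i ℓ
    (Function.update γ i.castSucc (ℓ c + γ i.castSucc)) ?_
    (by rwa [Function.update_self, Function.update_of_ne (Fin.succAbove_ne _ _)]))
    (shear_bijective _ _).injective.injOn
    (by rw [← shear_image_cayley]; exact Set.mapsTo_image _ _)
  intro k x hx
  rcases eq_or_ne k i.castSucc with rfl | hk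
  · rw [Function.update_self] at hx ⊢
    obtain ⟨y, hy, rfl⟩ := hx
    rw [map_add, h _ y hy]
  · simp only [Function.update_of_ne hk] at hx ⊢
    exact h k x hx

end Merge

theorem LinearIndependent.exists_linearMap_eq {ι K E : Type*} [Field K] [AddCommGroup E]
    [Module K E] {v : ι → E} (hv : LinearIndependent K v) (c : ι → K) :
    ∃ ℓ : E →ₗ[K] K, ∀ i, ℓ (v i) = c i := by
  obtain ⟨g, hg⟩ := LinearMap.exists_extend ((Module.Basis.span hv).constr K c)
  refine ⟨g, fun i => ?_⟩
  have := LinearMap.congr_fun hg (Module.Basis.span hv i)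
  rwa [LinearMap.comp_apply, Module.Basis.constr_basis, Module.Basis.span_apply] at this

-- `ℓ` is pulled back from the quotient by the direction spaces of the other simplices.
theorem exists_linearMap_levels {ι K E : Type*} [Field K] [AddCommGroup E] [Module K E]
    (s : ι → Set E) (hs : ∀ j, AffineIndependent K ((↑) : s j → E))
    (hindep : iSupIndep fun j => vectorSpan K (s j)) {j : ι} {v : E} (hv : v ∈ s j) :
    ∃ ℓ : E →ₗ[K] K, ∃ γ : ι → K,
      ℓ v = γ j + 1 ∧ ∀ j', ∀ w ∈ s j', (j' = j → w ≠ v) → ℓ w = γ j' := by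
  classical
  set U := ⨆ k, ⨆ (_ : k ≠ j), vectorSpan K (s k)
  have hli := (affineIndependent_iff_linearIndependent_vsub K _ ⟨v, hv⟩).1 (hs j)
  have hdisj : Disjoint (Submodule.span K (Set.range fun w : {x : s j // x ≠ ⟨v, hv⟩} =>
      (w : E) -ᵥ v)) (LinearMap.ker U.mkQ) := by
    rw [Submodule.ker_mkQ]
    refine (hindep j).mono_left (Submodule.span_le.2 ?_)
    rintro _ ⟨w, rfl⟩
    exact vsub_mem_vectorSpan K w.1.2 hv
  obtain ⟨g, hg⟩ := (hli.map hdisj).exists_linearMap_eq fun _ => -1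
  set ℓ := g ∘ₗ U.mkQ
  have hfacet : ∀ w ∈ s j, w ≠ v → ℓ w = ℓ v - 1 := fun w hw hwv => by
    have := hg ⟨⟨w, hw⟩, fun h => hwv (congrArg Subtype.val h)⟩
    simp only [Function.comp_apply, vsub_eq_sub, map_sub] at this
    simp only [ℓ, LinearMap.comp_apply]
    linear_combination this
  have hother : ∀ k ≠ j, ∀ a ∈ s k, ∀ b ∈ s k, ℓ a = ℓ b := fun k hk a ha b hb => by
    have hab : a - b ∈ U :=
      Submodule.mem_iSup_of_mem k (Submodule.mem_iSup_of_mem hk (vsub_mem_vectorSpan K ha hb))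
    have : ℓ (a - b) = 0 := by
      simp [ℓ, (Submodule.Quotient.mk_eq_zero U).2 hab]
    rwa [map_sub, sub_eq_zero] at this
  refine ⟨ℓ, fun k => if k = j then ℓ v - 1 else if h : (s k).Nonempty then ℓ h.some else 0,
    by simp, fun k w hw hwv => ?_⟩
  rcases eq_or_ne k j with rfl | hk
  · simpa using hfacet w hw (hwv rfl)
  · have hne : (s k).Nonempty := ⟨w, hw⟩
    simpa [hk, hne] using hother k hk w hw _ hne.some_mem

theorem exists_linearMap_levels_facets {d n : ℕ} (V : Fin n → Finset (Fin d → ℤ))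
    (hsimp : ∀ j, AffineIndependent ℝ (fun x : (V j : Set (Fin d → ℤ)) => castF x.1))
    (hindep : iSupIndep (fun j => Submodule.span ℝ
      (castF '' {z | ∃ a ∈ V j, ∃ b ∈ V j, z = a - b})))
    {j : Fin n} {v : Fin d → ℤ} (hv : v ∈ V j) :
    ∃ ℓ : (Fin d → ℝ) →ₗ[ℝ] ℝ, ∃ γ : Fin n → ℝ, ℓ (castF v) = γ j + 1 ∧
      ∀ j', ∀ w ∈ Function.update V j ((V j).erase v) j', ℓ (castF w) = γ j' := by
  have hs j : AffineIndependent ℝ ((↑) : castF '' (V j : Set (Fin d → ℤ)) → (Fin d → ℝ)) := by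
    have := (hsimp j).range
    rwa [← Set.image_eq_range] at this
  simp only [← vectorSpan_image_castF] at hindep
  obtain ⟨ℓ, γ, hℓv, hℓ⟩ := exists_linearMap_levels _ hs hindep ⟨v, hv, rfl⟩
  refine ⟨ℓ, γ, hℓv, fun j' w hw => ?_⟩
  rcases eq_or_ne j' j with rfl | hj
  · rw [Function.update_self, Finset.mem_erase] at hw
    exact hℓ j' _ ⟨w, hw.2, rfl⟩ fun _ => castF_injective.ne hw.1
  · rw [Function.update_of_ne hj] at hw
    exact hℓ j' _ ⟨w, hw, rfl⟩ fun h => absurd h hj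

theorem sum_update_sub_one_mul {n : ℕ} (r : Fin n → ℕ) (j : Fin n) (hr : 0 < r j)
    (γ : Fin n → ℝ) :
    ∑ k, (Function.update r j (r j - 1) k : ℝ) * γ k = ∑ k, (r k : ℝ) * γ k - γ j := by
  rw [← Finset.add_sum_erase _ _ (Finset.mem_univ j),
    ← Finset.add_sum_erase _ _ (Finset.mem_univ j), Function.update_self, Nat.cast_sub hr,
    Finset.sum_congr rfl fun k hk => by rw [Function.update_of_ne (Finset.ne_of_mem_erase hk)]]
  push_cast
  ring

theorem stmt_9_general (d n m : ℕ) (V : Fin n → Finset (Fin d → ℤ))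
    (hsimp : ∀ j, AffineIndependent ℝ (fun x : (V j : Set (Fin d → ℤ)) => castF x.1))
    (hindep : iSupIndep (fun j => Submodule.span ℝ
      (castF '' {z | ∃ a ∈ V j, ∃ b ∈ V j, z = a - b})))
    (A : Fin m → Fin n → ℕ) (i : Fin m) (j : Fin n)
    (hA : 0 < A i j)
    (v : Fin d → ℤ) (hv : v ∈ V j) :
    let A' : Fin m → Fin n → ℕ :=
      Function.update A i (Function.update (A i) j (A i j - 1))
    let F : Fin n → Finset (Fin d → ℤ) := Function.update V j ((V j).erase v)
    let A'' : Fin (m + 1) → Fin n → ℕ :=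
      Fin.insertNth i.castSucc (Function.update (A i) j (A i j - 1)) A
    let Q₁ : Set ((Fin d → ℝ) × (Fin m → ℝ)) :=
      cayley (Function.update (fun i' => rowSet V (A i')) i
        ((fun x => castF v + x) '' rowSet V (A' i)))
    let Q₂ : Set ((Fin d → ℝ) × (Fin m → ℝ)) :=
      cayley (Function.update (fun i' => rowSet F (A i')) i
        (convexHull ℝ (((fun x => castF v + x) '' rowSet F (A' i)) ∪ rowSet F (A i))))
    let φ₁ : ((Fin d → ℝ) × (Fin m → ℝ)) → ((Fin d → ℝ) × (Fin m → ℝ)) :=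
      fun p => (p.1 + p.2 i • castF v, p.2)
    let φ₂ : ((Fin d → ℝ) × (Fin (m + 1) → ℝ)) → ((Fin d → ℝ) × (Fin m → ℝ)) :=
      fun p => (p.1 + p.2 i.castSucc • castF v,
        fun k => (if k = i then p.2 i.castSucc else 0) + p.2 (Fin.succAbove i.castSucc k))
    let latticePts : Set ((Fin d → ℝ) × (Fin m → ℝ)) :=
      {p | ∃ z : (Fin d → ℤ) × (Fin m → ℤ), p = castP z ∧
        z.1 ∈ AddSubgroup.closure (⋃ j', ((V j' : Set (Fin d → ℤ)))) ∧ (∑ k, z.2 k) = 1}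
    -- `φ₁` is a lattice polytope isomorphism `𝒞(A'P) ≅ Q₁`
    (φ₁ '' cayley (fun i' => rowSet V (A' i')) = Q₁ ∧
      Function.Bijective φ₁ ∧
      (∀ z : (Fin d → ℤ) × (Fin m → ℤ), φ₁ (castP z) = castP (z.1 + z.2 i • v, z.2))) ∧
    -- `φ₂` is an affine isomorphism `𝒞(A''F) ≅ Q₂`
    (φ₂ '' cayley (fun k => rowSet F (A'' k)) = Q₂ ∧
      Set.InjOn φ₂ (cayley (fun k => rowSet F (A'' k)))) ∧
    -- `Q₁` and `Q₂` have all their vertices in `L_P × Λ^{m-1}`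
    (∃ S₁ : Set ((Fin d → ℝ) × (Fin m → ℝ)), S₁.Finite ∧ S₁ ⊆ latticePts ∧
      Q₁ = convexHull ℝ S₁) ∧
    (∃ S₂ : Set ((Fin d → ℝ) × (Fin m → ℝ)), S₂.Finite ∧ S₂ ⊆ latticePts ∧
      Q₂ = convexHull ℝ S₂) := by
  intro A' F A'' Q₁ Q₂ φ₁ φ₂ latticePts
  have hVL j' := image_castF_subset_map_closure V (subset_refl (V j'))
  have hFL j' := image_castF_subset_map_closure V
    (by by_cases hj : j' = j <;> simp [F, hj, Finset.erase_subset] : F j' ⊆ V j')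
  have hφ₂ : φ₂ = mergeSlices i ∘ shear i.castSucc (castF v) := rfl
  refine ⟨⟨?_, shear_bijective i _, fun z => Prod.ext (funext fun k => ?_) rfl⟩, ⟨?_, ?_⟩, ?_, ?_⟩
  · change shear i (castF v) '' _ = _
    rw [shear_image_cayley]
    congr 1
    funext k
    rcases eq_or_ne k i with rfl | hk
    · simp [A']
    · simp [A', hk]
  · simp [φ₁, castP, castF]
  · rw [hφ₂, mergeSlices_comp_shear_image_cayley]
    simp only [A'', A', Q₂, Fin.insertNth_apply_same, Fin.insertNth_apply_succAbove,
      Function.update_self]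
  · obtain ⟨ℓ, γ, hℓv, hℓF⟩ := exists_linearMap_levels_facets V hsimp hindep hv
    rw [hφ₂]
    refine injOn_mergeSlices_comp_shear _ i _ ℓ (fun k => ∑ j', (A'' k j' : ℝ) * γ j')
      (fun k x hx => apply_eq_of_mem_rowSet ℓ F γ hℓF _ hx) ?_
    simp only [A'', Fin.insertNth_apply_same, Fin.insertNth_apply_succAbove,
      sum_update_sub_one_mul _ _ hA, hℓv]
    linarith
  · refine cayley_eq_convexHull_castP _ _ ((Function.forall_update_iff _ _).2 ⟨?_, fun _ _ => ?_⟩)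
    · exact (isLatticePolytope_rowSet V hVL _).vadd (hVL j ⟨v, hv, rfl⟩)
    · exact isLatticePolytope_rowSet V hVL _
  · refine cayley_eq_convexHull_castP _ _ ((Function.forall_update_iff _ _).2 ⟨?_, fun _ _ => ?_⟩)
    · exact ((isLatticePolytope_rowSet F hFL _).vadd (hVL j ⟨v, hv, rfl⟩)).convexHull_union
        (isLatticePolytope_rowSet F hFL _)
    · exact isLatticePolytope_rowSet F hFL _

/-- in the two-piece Cayley subdivision of `𝒞(AP)` into `Q₁` and `Q₂`,
there is a lattice polytope isomorphism `φ₁ : 𝒞(A'P) → Q₁` (the linear map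
`(y, t) ↦ (y + tᵢ·v, t)`, which is bijective and preserves the integral structure), and
an affine isomorphism `φ₂ : 𝒞(A''F) → Q₂`, where `A''` is obtained from `A` by inserting
the row `A'ᵢ` above the `i`-th row; moreover `Q₁` and `Q₂` are convex hulls of finitely
many points of the lattice `L_P × Λ^{m-1}`. -/
theorem stmt_9 (d n m : ℕ) (V : Fin n → Finset (Fin d → ℤ))
    (hV : ∀ j, (V j).Nonempty)
    (hsimp : ∀ j, AffineIndependent ℝ (fun x : (V j : Set (Fin d → ℤ)) => castF x.1))
    (hindep : iSupIndep (fun j => Submodule.span ℝ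
      (castF '' {z | ∃ a ∈ V j, ∃ b ∈ V j, z = a - b})))
    (A : Fin m → Fin n → ℕ) (i : Fin m) (j : Fin n)
    (hA : 0 < A i j) (hcol : 1 < ∑ i', A i' j)
    (v : Fin d → ℤ) (hv : v ∈ V j) (hdim : 2 ≤ (V j).card) :
    let A' : Fin m → Fin n → ℕ :=
      Function.update A i (Function.update (A i) j (A i j - 1))
    let F : Fin n → Finset (Fin d → ℤ) := Function.update V j ((V j).erase v)
    let A'' : Fin (m + 1) → Fin n → ℕ :=
      Fin.insertNth i.castSucc (Function.update (A i) j (A i j - 1)) A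
    let Q₁ : Set ((Fin d → ℝ) × (Fin m → ℝ)) :=
      cayley (Function.update (fun i' => rowSet V (A i')) i
        ((fun x => castF v + x) '' rowSet V (A' i)))
    let Q₂ : Set ((Fin d → ℝ) × (Fin m → ℝ)) :=
      cayley (Function.update (fun i' => rowSet F (A i')) i
        (convexHull ℝ (((fun x => castF v + x) '' rowSet F (A' i)) ∪ rowSet F (A i))))
    let φ₁ : ((Fin d → ℝ) × (Fin m → ℝ)) → ((Fin d → ℝ) × (Fin m → ℝ)) :=
      fun p => (p.1 + p.2 i • castF v, p.2)
    let φ₂ : ((Fin d → ℝ) × (Fin (m + 1) → ℝ)) → ((Fin d → ℝ) × (Fin m → ℝ)) :=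
      fun p => (p.1 + p.2 i.castSucc • castF v,
        fun k => (if k = i then p.2 i.castSucc else 0) + p.2 (Fin.succAbove i.castSucc k))
    let latticePts : Set ((Fin d → ℝ) × (Fin m → ℝ)) :=
      {p | ∃ z : (Fin d → ℤ) × (Fin m → ℤ), p = castP z ∧
        z.1 ∈ AddSubgroup.closure (⋃ j', ((V j' : Set (Fin d → ℤ)))) ∧ (∑ k, z.2 k) = 1}
    -- `φ₁` is a lattice polytope isomorphism `𝒞(A'P) ≅ Q₁`
    (φ₁ '' cayley (fun i' => rowSet V (A' i')) = Q₁ ∧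
      Function.Bijective φ₁ ∧
      (∀ z : (Fin d → ℤ) × (Fin m → ℤ), φ₁ (castP z) = castP (z.1 + z.2 i • v, z.2))) ∧
    -- `φ₂` is an affine isomorphism `𝒞(A''F) ≅ Q₂`
    (φ₂ '' cayley (fun k => rowSet F (A'' k)) = Q₂ ∧
      Set.InjOn φ₂ (cayley (fun k => rowSet F (A'' k)))) ∧
    -- `Q₁` and `Q₂` have all their vertices in `L_P × Λ^{m-1}`
    (∃ S₁ : Set ((Fin d → ℝ) × (Fin m → ℝ)), S₁.Finite ∧ S₁ ⊆ latticePts ∧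
      Q₁ = convexHull ℝ S₁) ∧
    (∃ S₂ : Set ((Fin d → ℝ) × (Fin m → ℝ)), S₂.Finite ∧ S₂ ⊆ latticePts ∧
      Q₂ = convexHull ℝ S₂) :=
  stmt_9_general d n m V hsimp hindep A i j hA v hv
end

section
/- (Termination of the Cayley reduction process.) Fix (P₀, A₀) where P₀ is an n-tuple of affinely independent lattice simplices and A₀ an m×n nonnegative integer matrix. Consider the rewriting process on finite sets 𝒮 of triples (P, A, φ), starting from {(P₀, A₀, id)}, in which each move replaces an element (P,A,φ) with A j-reducible by the elements of f_j(P,A,φ) as defined in Section 3.4.1 of the paper (splitting off a vertex, passing to a facet array with an extra row, or collapsing a column used once). Then every sequence of moves terminates: no infinite sequence of moves exists. -/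
/-- A state of the Cayley reduction process: an array of lattice simplices in `ℤ^d`
(given by their vertex sets) together with a matrix of nonnegative integers with `n`
columns, presented as its list of rows. -/
abbrev Elt (d n : ℕ) := (Fin n → Finset (Fin d → ℤ)) × List (Fin n → ℕ)

/-- The moves `f_{ij}` of the Cayley reduction process of §3.4.1: a move at `(P, A)`
chooses a column `j` and a row `r` with `r j > 0` and either
(a) if `dim Pⱼ = 0`, decrements the `(i,j)` entry;
(b) if `dim Pⱼ > 0` and the `j`-th column sum is `> 1`, splits into the decremented
state and the state with `Pⱼ` replaced by the facet opposite a vertex `v` and the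
decremented row inserted above row `i`;
(c) if `dim Pⱼ > 0` and the `j`-th column sum is `1`, replaces `Pⱼ` by a point and
row `i` by `dim Pⱼ + 1` copies of the decremented row. -/
inductive ElemStep {d n : ℕ} : Elt d n → Multiset (Elt d n) → Prop
  | point (V : Fin n → Finset (Fin d → ℤ)) (A₁ A₂ : List (Fin n → ℕ))
      (r : Fin n → ℕ) (j : Fin n) (hr : 0 < r j) (hcard : (V j).card = 1) :
      ElemStep (V, A₁ ++ r :: A₂)
        {(V, A₁ ++ Function.update r j (r j - 1) :: A₂)}
  | split (V : Fin n → Finset (Fin d → ℤ)) (A₁ A₂ : List (Fin n → ℕ))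
      (r : Fin n → ℕ) (j : Fin n) (hr : 0 < r j) (hcard : 2 ≤ (V j).card)
      (hcol : 1 < ((A₁ ++ r :: A₂).map (fun q => q j)).sum)
      (v : Fin d → ℤ) (hv : v ∈ V j) :
      ElemStep (V, A₁ ++ r :: A₂)
        {(V, A₁ ++ Function.update r j (r j - 1) :: A₂),
         (Function.update V j ((V j).erase v),
           A₁ ++ Function.update r j (r j - 1) :: r :: A₂)}
  | collapse (V : Fin n → Finset (Fin d → ℤ)) (A₁ A₂ : List (Fin n → ℕ))
      (r : Fin n → ℕ) (j : Fin n) (hr : 0 < r j) (hcard : 2 ≤ (V j).card)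
      (hcol : ((A₁ ++ r :: A₂).map (fun q => q j)).sum = 1) :
      ElemStep (V, A₁ ++ r :: A₂)
        {(Function.update V j {0},
          A₁ ++ List.replicate ((V j).card) (Function.update r j 0) ++ A₂)}

/-- A move on a configuration (a multiset of states): replace one element by the
result of a move applied to it. -/
def Step {d n : ℕ} (S T : Multiset (Elt d n)) : Prop :=
  ∃ a ∈ S, ∃ R : Multiset (Elt d n), ElemStep a R ∧ T = S.erase a + R

/-! Every move replaces a state by states that are smaller in the lexicographic order on
(total number of vertices of `P`, total sum of the entries of `A`): passing to a facet or to a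
point removes vertices, and otherwise `P` is kept and one entry of `A` drops by one.  A move on
a configuration is therefore a step of the multiset extension of this well-founded order,
which is itself well-founded (Dershowitz–Manna). -/

theorem Finset.sum_update_lt_sum {ι M : Type*} [Fintype ι] [DecidableEq ι] [AddCommMonoid M]
    [PartialOrder M] [IsOrderedCancelAddMonoid M] (f : ι → M) {j : ι} {b : M} (hb : b < f j) :
    ∑ k, Function.update f j b k < ∑ k, f k := by
  refine Finset.sum_lt_sum (fun k _ => ?_) ⟨j, Finset.mem_univ j, by simpa using hb⟩
  rcases eq_or_ne k j with rfl | hk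
  · simpa using hb.le
  · simp [hk]

namespace Cayley

variable {d n : ℕ}

def vertexCount (P : Fin n → Finset (Fin d → ℤ)) : ℕ := ∑ j, (P j).card

def entrySum (A : List (Fin n → ℕ)) : ℕ := (A.map fun r => ∑ j, r j).sum

def measure (x : Elt d n) : ℕ ×ₗ ℕ := toLex (vertexCount x.1, entrySum x.2)

theorem vertexCount_update_lt (P : Fin n → Finset (Fin d → ℤ)) {j : Fin n}
    {F : Finset (Fin d → ℤ)} (hF : F.card < (P j).card) :
    vertexCount (Function.update P j F) < vertexCount P := by
  unfold vertexCount
  simp only [Function.apply_update (fun _ (s : Finset (Fin d → ℤ)) => s.card)]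
  exact Finset.sum_update_lt_sum _ hF

theorem entrySum_decrement_lt (A₁ A₂ : List (Fin n → ℕ)) {r : Fin n → ℕ} {j : Fin n}
    (hr : 0 < r j) :
    entrySum (A₁ ++ Function.update r j (r j - 1) :: A₂) < entrySum (A₁ ++ r :: A₂) := by
  have hrow : ∑ k, Function.update r j (r j - 1) k < ∑ k, r k :=
    Finset.sum_update_lt_sum r (Nat.sub_lt hr one_pos)
  simp only [entrySum, List.map_append, List.map_cons, List.sum_append, List.sum_cons]
  omega

theorem measure_decrement_lt (P : Fin n → Finset (Fin d → ℤ)) (A₁ A₂ : List (Fin n → ℕ))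
    {r : Fin n → ℕ} {j : Fin n} (hr : 0 < r j) :
    measure ((P, A₁ ++ Function.update r j (r j - 1) :: A₂) : Elt d n)
      < measure (P, A₁ ++ r :: A₂) :=
  Prod.Lex.right _ (entrySum_decrement_lt A₁ A₂ hr)

theorem measure_update_lt (P : Fin n → Finset (Fin d → ℤ)) {j : Fin n}
    {F : Finset (Fin d → ℤ)} (hF : F.card < (P j).card) (A B : List (Fin n → ℕ)) :
    measure ((Function.update P j F, A) : Elt d n) < measure (P, B) :=
  Prod.Lex.left _ _ (vertexCount_update_lt P hF)

theorem measure_lt_of_elemStep {x : Elt d n} {R : Multiset (Elt d n)} (h : ElemStep x R) :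
    ∀ y ∈ R, measure y < measure x := by
  cases h with
  | point P A₁ A₂ r j hr =>
    simpa using measure_decrement_lt P A₁ A₂ hr
  | split P A₁ A₂ r j hr _ _ v hv =>
    have hfacet : ((P j).erase v).card < (P j).card := Finset.card_erase_lt_of_mem hv
    simpa using ⟨measure_decrement_lt P A₁ A₂ hr, measure_update_lt P hfacet _ _⟩
  | collapse P A₁ A₂ r j _ hcard =>
    have hpoint : ({0} : Finset (Fin d → ℤ)).card < (P j).card := by
      rw [Finset.card_singleton]; omega
    simpa using measure_update_lt P hpoint _ _

theorem cutExpand_of_step {S T : Multiset (Elt d n)} (h : Step S T) :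
    Relation.CutExpand (fun x y => measure x < measure y) T S := by
  obtain ⟨x, hx, R, hxR, rfl⟩ := h
  have hS : S.erase x + {x} = S := by
    rw [add_comm, Multiset.singleton_add, Multiset.cons_erase hx]
  simpa only [hS] using (Relation.cutExpand_add_left (S.erase x)).2
    (Relation.cutExpand_singleton (r := fun x y => measure x < measure y)
      (measure_lt_of_elemStep hxR))

theorem wellFounded_flip_step : WellFounded (flip (Step (d := d) (n := n))) :=
  Subrelation.wf (fun h => cutExpand_of_step h) (InvImage.wf measure wellFounded_lt).cutExpand

end Cayley

/-- termination of the Cayley reduction process: there is no infinite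
sequence of moves. -/
theorem stmt_11 (d n : ℕ) :
    ¬ ∃ seq : ℕ → Multiset (Elt d n), ∀ k, Step (seq k) (seq (k + 1)) := by
  rintro ⟨seq, hseq⟩
  exact (wellFounded_iff_isEmpty_descending_chain.1 Cayley.wellFounded_flip_step).false
    ⟨seq, hseq⟩
end
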